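/- Let ℓ₁ = s₂ + s₃, ℓ₂ = s₁ + s₃, ℓ₃ = s₁ + s₂ in ℚ[s₁,s₂,s₃], and let I be the ideal generated by the six polynomials (ℓᵢ+1)(ℓⱼ+1) for i ≠ j together with sₖ(ℓₖ+1)(ℓₖ+2) for k = 1,2,3. If b ∈ ℚ[t] is a nonzero polynomial such that b(s₁+s₂+s₃) ∈ I, then (t+3/2)(t+2)² divides b(t) in ℚ[t]. -/

import Mathlib

open MvPolynomial

/-- `ℓ₁ = s₂+s₃`, `ℓ₂ = s₁+s₃`, `ℓ₃ = s₁+s₂` in `ℚ[s₁,s₂,s₃]`. -/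
noncomputable def ell (k : Fin 3) : MvPolynomial (Fin 3) ℚ :=
  ∑ j ∈ Finset.univ.erase k, X j

/-- The ideal generated by `(ℓᵢ+1)(ℓⱼ+1)` for `i ≠ j` and `sₖ(ℓₖ+1)(ℓₖ+2)`. -/
noncomputable def I₁ : Ideal (MvPolynomial (Fin 3) ℚ) :=
  Ideal.span ({p | ∃ i j : Fin 3, i ≠ j ∧ p = (ell i + 1) * (ell j + 1)} ∪
    {p | ∃ k : Fin 3, p = X k * ((ell k + 1) * (ell k + 2))})


lemma ell_eq (k : Fin 3) :
    ell k = (X 0 + X 1 + X 2 : MvPolynomial (Fin 3) ℚ) - X k := by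
  rw [ell, Finset.sum_erase_eq_sub (Finset.mem_univ k), Fin.sum_univ_three]

noncomputable def φ : MvPolynomial (Fin 3) ℚ →ₐ[ℚ] Polynomial ℚ :=
  aeval ![-1 + Polynomial.X, -1 + Polynomial.X, -Polynomial.X]

lemma φS : φ (X 0 + X 1 + X 2 : MvPolynomial (Fin 3) ℚ) = Polynomial.X - 2 := by
  simp [φ]; ring

lemma φl0 : φ (ell 0) = -1 := by simp [ell_eq, φ]; ring
lemma φl1 : φ (ell 1) = -1 := by simp [ell_eq, φ]; ring
lemma φl2 : φ (ell 2) = 2 * Polynomial.X - 2 := by simp [ell_eq, φ]; ring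

lemma φx0 : φ (X 0) = -1 + Polynomial.X := by simp [φ]
lemma φx1 : φ (X 1) = -1 + Polynomial.X := by simp [φ]
lemma φx2 : φ (X 2) = -Polynomial.X := by simp [φ]

lemma φ_maps {p : MvPolynomial (Fin 3) ℚ} (hp : p ∈ I₁) :
    φ p ∈ Ideal.span {Polynomial.X ^ 2} := by
  have : I₁ ≤ (Ideal.span {Polynomial.X ^ 2}).comap φ.toRingHom := by
    rw [I₁, Ideal.span_le]
    rintro p (⟨i, j, hij, rfl⟩ | ⟨k, rfl⟩) <;>
      simp only [SetLike.mem_coe, Ideal.mem_comap, AlgHom.toRingHom_eq_coe,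
        RingHom.coe_coe, map_mul, map_add, map_one, map_ofNat, Ideal.mem_span_singleton]
    · fin_cases i <;> fin_cases j <;> simp_all [φl0, φl1, φl2]
    · fin_cases k <;> simp [φl0, φl1, φl2, φx0, φx1, φx2]
      exact ⟨4 * Polynomial.X - 2, by ring⟩
  exact this hp

noncomputable def ψ : MvPolynomial (Fin 3) ℚ →ₐ[ℚ] ℚ :=
  aeval (fun _ => (-1/2 : ℚ))

lemma ψS : ψ (X 0 + X 1 + X 2 : MvPolynomial (Fin 3) ℚ) = -3/2 := by
  simp [ψ]; ring

lemma ψl (k : Fin 3) : ψ (ell k) = -1 := by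
  rw [ell_eq, map_sub, ψS]; simp [ψ]; ring

lemma ψ_maps {p : MvPolynomial (Fin 3) ℚ} (hp : p ∈ I₁) : ψ p = 0 := by
  have : I₁ ≤ RingHom.ker ψ.toRingHom := by
    rw [I₁, Ideal.span_le]
    rintro p (⟨i, j, hij, rfl⟩ | ⟨k, rfl⟩) <;>
      simp [RingHom.mem_ker, map_mul, map_add, ψl]
  exact this hp

theorem stmt_2 (b : Polynomial ℚ) (hb : b ≠ 0)
    (h : Polynomial.aeval (X 0 + X 1 + X 2 : MvPolynomial (Fin 3) ℚ) b ∈ I₁) :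
    (Polynomial.X + Polynomial.C (3/2 : ℚ)) * (Polynomial.X + 2) ^ 2 ∣ b := by
  -- root at -3/2
  have hψ : Polynomial.aeval (-3/2 : ℚ) b = 0 := by
    have := ψ_maps h
    rwa [← Polynomial.aeval_algHom_apply, ψS] at this
  have d1 : (Polynomial.X + Polynomial.C (3/2 : ℚ)) ∣ b := by
    have : (Polynomial.X - Polynomial.C (-3/2 : ℚ)) ∣ b :=
      Polynomial.dvd_iff_isRoot.mpr (by simpa [Polynomial.aeval_def, Polynomial.IsRoot] using hψ)
    rw [show (-3/2 : ℚ) = -(3/2) by norm_num, map_neg, sub_neg_eq_add] at this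
    exact this
  -- double root at -2
  have hφ : Polynomial.X ^ 2 ∣ b.comp (Polynomial.X - 2) := by
    have := φ_maps h
    rw [← Polynomial.aeval_algHom_apply, φS, ← Polynomial.comp_eq_aeval,
      Ideal.mem_span_singleton] at this
    exact this
  have d2 : (Polynomial.X + 2) ^ 2 ∣ b := by
    obtain ⟨q, hq⟩ := hφ
    refine ⟨q.comp (Polynomial.X + 2), ?_⟩
    have : b = (b.comp (Polynomial.X - 2)).comp (Polynomial.X + 2) := by
      rw [Polynomial.comp_assoc]
      simp [Polynomial.sub_comp, Polynomial.X_comp]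
    rw [this, hq, Polynomial.mul_comp, Polynomial.pow_comp, Polynomial.X_comp]
  have hcop : IsCoprime (Polynomial.X + Polynomial.C (3/2 : ℚ)) ((Polynomial.X + 2) ^ 2) := by
    have : IsCoprime (Polynomial.X - Polynomial.C (-3/2 : ℚ))
        ((Polynomial.X - Polynomial.C (-2 : ℚ)) ^ 2) :=
      (Polynomial.isCoprime_X_sub_C_of_isUnit_sub (by norm_num)).pow_right
    rw [show (-3/2 : ℚ) = -(3/2) by norm_num, show (-2 : ℚ) = -2 from rfl, map_neg,
      map_neg, sub_neg_eq_add, sub_neg_eq_add, map_ofNat] at this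
    exact this
  exact hcop.mul_dvd d1 d2
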